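/- Suppose Assumption (iv) holds. Then for every ε > 0 there exists a constant C > 0, independent of h, such that ‖(L^{−β} − L_h^{−β}Π_h)g‖ ≤ C h^s ‖g‖_{s−2β+ε} for all g ∈ Ḣ^{s−2β+ε} and all h ∈ (0,h₀). -/

import Mathlib

/-!
The key is subordination: `Γ(β) λ^{-β} = ∫₀^∞ t^{β-1} e^{-λt} dt`. Tested against any `x`,
`Γ(β) (L^{-β} - L_h^{-β} Π_h) g` is therefore the integral of
`t^{β-1} ⟪(S(t) - S_h(t) Π_h) g, x⟫` over `(0, ∞)`. Assumption (iv) with `σ = s` bounds the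
integrand by `h^s t^{β-1+(θ-s)/2} ‖g‖_θ ‖x‖` on `(0, 1]`, where `θ = min (s - 2β + ε) s`
makes the exponent exceed `-1`, and by `h^s t^{β-1-s/2} ‖g‖_0 ‖x‖` on `(1, ∞)`, where
`s > 2β` makes it integrable. Both norms are dominated by `‖g‖_{s-2β+ε}` since `λ_j ≥ λ_0`.
-/

noncomputable section
open MeasureTheory ProbabilityTheory Real Filter
open scoped InnerProductSpace RealInnerProductSpace NNReal

variable {H : Type*} [NormedAddCommGroup H] [InnerProductSpace ℝ H]

/-- The fractional power operator `L^{-β}`, defined spectrally via the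
orthonormal eigenbasis `e` and eigenvalues `lam`. -/
def fracPow (lam : ℕ → ℝ) (β : ℝ) (e : ℕ → H) (x : H) : H :=
  ∑' j, (lam j ^ (-β) * ⟪x, e j⟫) • e j

/-- The `Ḣ^θ`-norm `‖g‖_θ`. -/
def dotNorm (lam : ℕ → ℝ) (θ : ℝ) (e : ℕ → H) (g : H) : ℝ :=
  Real.sqrt (∑' j, lam j ^ θ * ⟪g, e j⟫ ^ 2)

/-- Membership in `Ḣ^θ`. -/
def memDot (lam : ℕ → ℝ) (θ : ℝ) (e : ℕ → H) (g : H) : Prop :=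
  Summable fun j => lam j ^ θ * ⟪g, e j⟫ ^ 2

/-- The orthogonal projection `Π_h` onto `V_h = span (eh 0, …, eh (N-1))`. -/
def projh (N : ℕ) (eh : ℕ → H) (x : H) : H :=
  ∑ j ∈ Finset.range N, ⟪x, eh j⟫ • eh j

/-- The discrete operator `L_h^{-β} Π_h`. -/
def fracPowh (N : ℕ) (lamh : ℕ → ℝ) (β : ℝ) (eh : ℕ → H) (x : H) : H :=
  ∑ j ∈ Finset.range N, (lamh j ^ (-β) * ⟪x, eh j⟫) • eh j

/-- Number of quadrature nodes to the left: `K⁻ = ⌈π²/(4βk²)⌉`. -/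
def Kminus (β k : ℝ) : ℕ := ⌈π ^ 2 / (4 * β * k ^ 2)⌉₊

/-- Number of quadrature nodes to the right: `K⁺ = ⌈π²/(4(1-β)k²)⌉`. -/
def Kplus (β k : ℝ) : ℕ := ⌈π ^ 2 / (4 * (1 - β) * k ^ 2)⌉₊

/-- Scalar action of the sinc quadrature operator `Q_{h,k}^β` on an eigenvector
with eigenvalue `μ`. -/
def quadCoeff (β k μ : ℝ) : ℝ :=
  2 * k * Real.sin (π * β) / π *
    ∑ ℓ ∈ Finset.Icc (-(Kminus β k : ℤ)) (Kplus β k : ℤ),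
      Real.exp (2 * β * (ℓ : ℝ) * k) / (1 + Real.exp (2 * (ℓ : ℝ) * k) * μ)

/-- The quadrature operator composed with the projection: `Q_{h,k}^β Π_h`. -/
def quadOp (N : ℕ) (lamh : ℕ → ℝ) (β k : ℝ) (eh : ℕ → H) (x : H) : H :=
  ∑ j ∈ Finset.range N, (quadCoeff β k (lamh j) * ⟪x, eh j⟫) • eh j

/-- The semigroup `S(t)` generated by `-L`. -/
def semiGp (lam : ℕ → ℝ) (e : ℕ → H) (t : ℝ) (x : H) : H :=
  ∑' j, (Real.exp (-(lam j) * t) * ⟪x, e j⟫) • e j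

/-- The discrete semigroup composed with the projection: `S_h(t) Π_h`. -/
def semiGph (N : ℕ) (lamh : ℕ → ℝ) (eh : ℕ → H) (t : ℝ) (x : H) : H :=
  ∑ j ∈ Finset.range N, (Real.exp (-(lamh j) * t) * ⟪x, eh j⟫) • eh j

/-- `f_{α,β}(h) = h^{d(αβ-1)}` if `αβ ≠ 1`, and `|ln h|` if `αβ = 1`. -/
def fab (α β : ℝ) (d : ℕ) (h : ℝ) : ℝ :=
  if α * β = 1 then |Real.log h| else h ^ ((d : ℝ) * (α * β - 1))

/-- The `p`-th absolute moment `μ_p` of the standard normal distribution. -/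
def stdMoment (p : ℕ) : ℝ := ∫ x, |x| ^ p ∂(gaussianReal 0 1)

open Set

section GammaSeries

lemma integrableOn_rpow_mul_exp_neg_mul {a r : ℝ} (ha : 0 < a) (hr : 0 < r) :
    IntegrableOn (fun t : ℝ => t ^ (a - 1) * exp (-r * t)) (Ioi 0) := by
  simpa only [rpow_one, neg_mul] using
    integrableOn_rpow_mul_exp_neg_mul_rpow (p := 1) (by linarith) one_pos hr

lemma integral_rpow_mul_exp_neg_mul {a r : ℝ} (ha : 0 < a) (hr : 0 < r) :
    ∫ t in Ioi (0 : ℝ), t ^ (a - 1) * exp (-r * t) = Gamma a * r ^ (-a) := by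
  simp_rw [neg_mul]
  rw [integral_rpow_mul_exp_neg_mul_Ioi ha hr, one_div, inv_rpow hr.le, rpow_neg hr.le, mul_comm]

variable {lam a : ℕ → ℝ} {m β : ℝ}

lemma integrableOn_rpow_mul_tsum_exp (hβ : 0 < β) (hm : 0 < m) (hlam : ∀ j, m ≤ lam j)
    (ha : Summable fun j => |a j|) :
    IntegrableOn (fun t => t ^ (β - 1) * ∑' j, exp (-lam j * t) * a j) (Ioi 0) := by
  have hbound : ∀ j, ∀ t ∈ Ioi (0 : ℝ), ‖exp (-lam j * t) * a j‖ ≤ exp (-m * t) * |a j| := by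
    intro j t ht
    rw [norm_mul, Real.norm_eq_abs, Real.norm_eq_abs, abs_exp]
    exact mul_le_mul_of_nonneg_right (exp_le_exp.2 (by nlinarith [hlam j, mem_Ioi.1 ht]))
      (abs_nonneg _)
  have hcont : ContinuousOn (fun t => t ^ (β - 1) * ∑' j, exp (-lam j * t) * a j) (Ioi 0) := by
    refine (continuousOn_id.rpow_const fun t ht => Or.inl (ne_of_gt ht)).mul
      (continuousOn_tsum (fun j => by fun_prop) ha fun j t ht => (hbound j t ht).trans ?_)
    exact mul_le_of_le_one_left (abs_nonneg _) (exp_le_one_iff.2 (by nlinarith [mem_Ioi.1 ht]))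
  refine Integrable.mono' ((integrableOn_rpow_mul_exp_neg_mul hβ hm).mul_const (∑' j, |a j|))
    (hcont.aestronglyMeasurable measurableSet_Ioi) ?_
  filter_upwards [ae_restrict_mem measurableSet_Ioi] with t ht
  rw [norm_mul, norm_of_nonneg (rpow_nonneg (le_of_lt ht) _), mul_assoc, ← tsum_mul_left]
  exact mul_le_mul_of_nonneg_left
    (tsum_of_norm_bounded (ha.mul_left _).hasSum (hbound · t ht)) (rpow_nonneg (le_of_lt ht) _)

lemma integral_rpow_mul_tsum_exp (hβ : 0 < β) (hm : 0 < m) (hlam : ∀ j, m ≤ lam j)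
    (ha : Summable fun j => |a j|) :
    ∫ t in Ioi 0, t ^ (β - 1) * ∑' j, exp (-lam j * t) * a j =
      Gamma β * ∑' j, lam j ^ (-β) * a j := by
  have hlam_pos j : 0 < lam j := hm.trans_le (hlam j)
  set F : ℕ → ℝ → ℝ := fun j t => t ^ (β - 1) * exp (-lam j * t) * a j
  have hF_int j : Integrable (F j) (volume.restrict (Ioi 0)) :=
    (integrableOn_rpow_mul_exp_neg_mul hβ (hlam_pos j)).mul_const _
  have hF j : ∫ t in Ioi 0, F j t = Gamma β * lam j ^ (-β) * a j := by
    rw [integral_mul_const, integral_rpow_mul_exp_neg_mul hβ (hlam_pos j)]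
  have hF_norm j : ∫ t in Ioi 0, ‖F j t‖ = Gamma β * lam j ^ (-β) * |a j| := by
    rw [← integral_rpow_mul_exp_neg_mul hβ (hlam_pos j), ← integral_mul_const]
    refine setIntegral_congr_fun measurableSet_Ioi fun t ht => ?_
    rw [norm_mul, norm_mul, Real.norm_eq_abs, Real.norm_eq_abs, Real.norm_eq_abs, abs_exp,
      abs_of_nonneg (rpow_nonneg (le_of_lt ht) _)]
  have hF_sum : Summable fun j => ∫ t in Ioi 0, ‖F j t‖ := by
    refine (ha.mul_left (Gamma β * m ^ (-β))).of_nonneg_of_le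
      (fun j => integral_nonneg fun t => norm_nonneg _) fun j => ?_
    rw [hF_norm]
    exact mul_le_mul_of_nonneg_right (mul_le_mul_of_nonneg_left
      (rpow_le_rpow_of_nonpos hm (hlam j) (by linarith)) (Gamma_pos_of_pos hβ).le) (abs_nonneg _)
  calc ∫ t in Ioi 0, t ^ (β - 1) * ∑' j, exp (-lam j * t) * a j
      = ∫ t in Ioi 0, ∑' j, F j t := by
        simp_rw [F, mul_assoc, tsum_mul_left]
    _ = ∑' j, ∫ t in Ioi 0, F j t := (integral_tsum_of_summable_integral_norm hF_int hF_sum).symm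
    _ = Gamma β * ∑' j, lam j ^ (-β) * a j := by
        simp_rw [hF, mul_assoc, tsum_mul_left]

end GammaSeries

section Spectral

variable {e : ℕ → H}

lemma Orthonormal.summable_abs_inner_mul_inner (he : Orthonormal ℝ e) (g x : H) :
    Summable fun j => |⟪g, e j⟫ * ⟪e j, x⟫| := by
  have hsq (y : H) : Summable fun j => ⟪y, e j⟫ ^ 2 := by
    simpa only [real_inner_comm, Real.norm_eq_abs, sq_abs] using he.inner_products_summable y
  refine (((hsq g).add (hsq x)).div_const 2).of_nonneg_of_le (fun j => abs_nonneg _) fun j => ?_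
  rw [abs_mul, real_inner_comm x]
  nlinarith [two_mul_le_add_sq |⟪g, e j⟫| |⟪x, e j⟫|, sq_abs ⟪g, e j⟫, sq_abs ⟪x, e j⟫]

variable [CompleteSpace H]

lemma Orthonormal.inner_tsum_smul (he : Orthonormal ℝ e) {f : ℕ → ℝ} {M : ℝ}
    (hf : ∀ j, |f j| ≤ M) (g x : H) :
    ⟪∑' j, (f j * ⟪g, e j⟫) • e j, x⟫ = ∑' j, f j * (⟪g, e j⟫ * ⟪e j, x⟫) := by
  have hsq : Summable fun j => ‖f j * ⟪g, e j⟫‖ ^ 2 := by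
    refine ((he.inner_products_summable g).mul_left (M ^ 2)).of_nonneg_of_le
      (fun j => by positivity) fun j => ?_
    rw [norm_mul, mul_pow, real_inner_comm]
    exact mul_le_mul_of_nonneg_right (pow_le_pow_left₀ (norm_nonneg _) (hf j) 2) (by positivity)
  have hsum : Summable fun j => (f j * ⟪g, e j⟫) • e j := by
    simpa [LinearIsometry.toSpanSingleton_apply] using
      (he.orthogonalFamily.summable_iff_norm_sq_summable _).2 hsq
  rw [real_inner_comm, ← innerSL_apply_apply ℝ, (innerSL ℝ x).map_tsum hsum]
  simp only [innerSL_apply_apply, inner_smul_right, real_inner_comm x, mul_assoc]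

variable {lam : ℕ → ℝ} {m β : ℝ}

lemma Orthonormal.inner_semiGp (he : Orthonormal ℝ e) (hlam : ∀ j, 0 ≤ lam j) {t : ℝ}
    (ht : 0 ≤ t) (g x : H) :
    ⟪semiGp lam e t g, x⟫ = ∑' j, exp (-lam j * t) * (⟪g, e j⟫ * ⟪e j, x⟫) :=
  he.inner_tsum_smul (M := 1) (fun j => by
    rw [abs_exp, exp_le_one_iff]; nlinarith [hlam j]) g x

lemma Orthonormal.inner_fracPow (he : Orthonormal ℝ e) (hm : 0 < m) (hlam : ∀ j, m ≤ lam j)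
    (hβ : 0 ≤ β) (g x : H) :
    ⟪fracPow lam β e g, x⟫ = ∑' j, lam j ^ (-β) * (⟪g, e j⟫ * ⟪e j, x⟫) :=
  he.inner_tsum_smul (M := m ^ (-β)) (fun j => by
    rw [abs_of_nonneg (rpow_nonneg (hm.le.trans (hlam j)) _)]
    exact rpow_le_rpow_of_nonpos hm (hlam j) (by linarith)) g x

lemma Orthonormal.integrableOn_rpow_mul_inner_semiGp (he : Orthonormal ℝ e) (hβ : 0 < β)
    (hm : 0 < m) (hlam : ∀ j, m ≤ lam j) (g x : H) :
    IntegrableOn (fun t => t ^ (β - 1) * ⟪semiGp lam e t g, x⟫) (Ioi 0) :=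
  (integrableOn_rpow_mul_tsum_exp hβ hm hlam (he.summable_abs_inner_mul_inner g x)).congr_fun
    (fun t ht => by rw [he.inner_semiGp (fun j => hm.le.trans (hlam j)) (le_of_lt ht)])
    measurableSet_Ioi

lemma Orthonormal.integral_rpow_mul_inner_semiGp (he : Orthonormal ℝ e) (hβ : 0 < β)
    (hm : 0 < m) (hlam : ∀ j, m ≤ lam j) (g x : H) :
    ∫ t in Ioi 0, t ^ (β - 1) * ⟪semiGp lam e t g, x⟫ = Gamma β * ⟪fracPow lam β e g, x⟫ := by
  rw [he.inner_fracPow hm hlam hβ.le, ← integral_rpow_mul_tsum_exp hβ hm hlam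
    (he.summable_abs_inner_mul_inner g x)]
  exact setIntegral_congr_fun measurableSet_Ioi fun t ht => by
    rw [he.inner_semiGp (fun j => hm.le.trans (hlam j)) (le_of_lt ht)]

end Spectral

section Discrete

variable {n : ℕ} {lamh : ℕ → ℝ} {eh : ℕ → H} {β : ℝ}

lemma inner_semiGph (t : ℝ) (g x : H) :
    ⟪semiGph n lamh eh t g, x⟫ =
      ∑ j ∈ Finset.range n, exp (-lamh j * t) * (⟪g, eh j⟫ * ⟪eh j, x⟫) := by
  simp only [semiGph, sum_inner, real_inner_smul_left, mul_assoc]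

lemma inner_fracPowh (g x : H) :
    ⟪fracPowh n lamh β eh g, x⟫ =
      ∑ j ∈ Finset.range n, lamh j ^ (-β) * (⟪g, eh j⟫ * ⟪eh j, x⟫) := by
  simp only [fracPowh, sum_inner, real_inner_smul_left, mul_assoc]

lemma integrableOn_rpow_mul_inner_semiGph (hβ : 0 < β) (hlamh : ∀ j, 0 < lamh j) (g x : H) :
    IntegrableOn (fun t => t ^ (β - 1) * ⟪semiGph n lamh eh t g, x⟫) (Ioi 0) := by
  simp_rw [inner_semiGph, Finset.mul_sum, ← mul_assoc (_ ^ (β - 1))]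
  exact integrable_finsetSum _ fun j _ =>
    (integrableOn_rpow_mul_exp_neg_mul hβ (hlamh j)).mul_const _

lemma integral_rpow_mul_inner_semiGph (hβ : 0 < β) (hlamh : ∀ j, 0 < lamh j) (g x : H) :
    ∫ t in Ioi 0, t ^ (β - 1) * ⟪semiGph n lamh eh t g, x⟫ =
      Gamma β * ⟪fracPowh n lamh β eh g, x⟫ := by
  simp_rw [inner_semiGph, inner_fracPowh, Finset.mul_sum, ← mul_assoc (_ ^ (β - 1)),
    ← mul_assoc (Gamma β)]
  rw [integral_finsetSum _ fun j _ =>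
    (integrableOn_rpow_mul_exp_neg_mul hβ (hlamh j)).mul_const _]
  simp_rw [integral_mul_const, integral_rpow_mul_exp_neg_mul hβ (hlamh _)]

end Discrete

lemma Orthonormal.inner_gamma_smul_fracPow_sub_fracPowh [CompleteSpace H] {e : ℕ → H}
    (he : Orthonormal ℝ e) {lam : ℕ → ℝ} {m β : ℝ} (hβ : 0 < β) (hm : 0 < m)
    (hlam : ∀ j, m ≤ lam j) {n : ℕ} {lamh : ℕ → ℝ} (hlamh : ∀ j, 0 < lamh j) (eh : ℕ → H)
    (g x : H) :
    IntegrableOn (fun t => ⟪t ^ (β - 1) • (semiGp lam e t g - semiGph n lamh eh t g), x⟫)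
        (Ioi 0) ∧
      ⟪Gamma β • (fracPow lam β e g - fracPowh n lamh β eh g), x⟫ =
        ∫ t in Ioi 0, ⟪t ^ (β - 1) • (semiGp lam e t g - semiGph n lamh eh t g), x⟫ := by
  have hS := he.integrableOn_rpow_mul_inner_semiGp hβ hm hlam g x
  have hSh := integrableOn_rpow_mul_inner_semiGph (n := n) (eh := eh) hβ hlamh g x
  simp_rw [real_inner_smul_left, inner_sub_left, mul_sub]
  refine ⟨hS.sub hSh, ?_⟩
  rw [integral_sub hS hSh, he.integral_rpow_mul_inner_semiGp hβ hm hlam,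
    integral_rpow_mul_inner_semiGph hβ hlamh]

lemma abs_setIntegral_Ioi_zero_le {f : ℝ → ℝ} {A B a b : ℝ} (ha : -1 < a) (hb : b < -1)
    (hf : IntegrableOn f (Ioi 0)) (h₁ : ∀ t ∈ Ioc 0 1, |f t| ≤ A * t ^ a)
    (h₂ : ∀ t ∈ Ioi 1, |f t| ≤ B * t ^ b) :
    |∫ t in Ioi 0, f t| ≤ A / (a + 1) - B / (b + 1) := by
  have hpow₁ : IntegrableOn (fun t : ℝ => t ^ a) (Ioc 0 1) :=
    (intervalIntegral.intervalIntegrable_rpow' ha).1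
  have hpow₂ : IntegrableOn (fun t : ℝ => t ^ b) (Ioi 1) :=
    integrableOn_Ioi_rpow_of_lt hb one_pos
  have hint₁ : ∫ t in Ioc 0 1, t ^ a = 1 / (a + 1) := by
    rw [← intervalIntegral.integral_of_le zero_le_one, integral_rpow (Or.inl ha), one_rpow,
      zero_rpow (by linarith)]
    ring
  have hint₂ : ∫ t in Ioi 1, t ^ b = -1 / (b + 1) := by
    rw [integral_Ioi_rpow_of_lt hb one_pos, one_rpow]
  rw [← Ioc_union_Ioi_eq_Ioi zero_le_one, setIntegral_union (Ioc_disjoint_Ioi le_rfl)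
    measurableSet_Ioi (hf.mono_set Ioc_subset_Ioi_self)
    (hf.mono_set (Ioi_subset_Ioi zero_le_one))]
  calc |(∫ t in Ioc 0 1, f t) + ∫ t in Ioi 1, f t|
      ≤ (∫ t in Ioc 0 1, |f t|) + ∫ t in Ioi 1, |f t| := by
        refine (abs_add_le _ _).trans (add_le_add ?_ ?_) <;> exact abs_integral_le_integral_abs
    _ ≤ (∫ t in Ioc 0 1, A * t ^ a) + ∫ t in Ioi 1, B * t ^ b :=
        add_le_add
          (setIntegral_mono_on (hf.mono_set Ioc_subset_Ioi_self).abs (hpow₁.const_mul A)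
            measurableSet_Ioc h₁)
          (setIntegral_mono_on (hf.mono_set (Ioi_subset_Ioi zero_le_one)).abs
            (hpow₂.const_mul B) measurableSet_Ioi h₂)
    _ = A / (a + 1) - B / (b + 1) := by
        rw [integral_const_mul, integral_const_mul, hint₁, hint₂]
        ring

lemma norm_le_of_inner_eq_setIntegral {Δ : H} {D : ℝ → H} {A B a b : ℝ} (ha : -1 < a)
    (hb : b < -1)
    (hD : ∀ x, IntegrableOn (fun t => ⟪D t, x⟫) (Ioi 0) ∧ ⟪Δ, x⟫ = ∫ t in Ioi 0, ⟪D t, x⟫)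
    (h₁ : ∀ t ∈ Ioc 0 1, ‖D t‖ ≤ A * t ^ a) (h₂ : ∀ t ∈ Ioi 1, ‖D t‖ ≤ B * t ^ b) :
    ‖Δ‖ ≤ A / (a + 1) - B / (b + 1) := by
  have hA : 0 ≤ A := by simpa using (norm_nonneg _).trans (h₁ 1 ⟨one_pos, le_rfl⟩)
  have hB : 0 ≤ B := nonneg_of_mul_nonneg_left
    ((norm_nonneg _).trans (h₂ 2 (show (1 : ℝ) < 2 from one_lt_two))) (rpow_pos_of_pos two_pos b)
  have hK : 0 ≤ A / (a + 1) - B / (b + 1) := by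
    have : B / (b + 1) ≤ 0 := div_nonpos_of_nonneg_of_nonpos hB (by linarith)
    have : 0 ≤ A / (a + 1) := div_nonneg hA (by linarith)
    linarith
  rw [← innerSL_apply_norm ℝ]
  refine ContinuousLinearMap.opNorm_le_bound _ hK fun x => ?_
  rw [innerSL_apply_apply, Real.norm_eq_abs, (hD x).2]
  have hbound {c : ℝ} {t : ℝ} (ht : ‖D t‖ ≤ c) : |⟪D t, x⟫| ≤ c * ‖x‖ :=
    (abs_real_inner_le_norm _ _).trans (mul_le_mul_of_nonneg_right ht (norm_nonneg x))
  calc |∫ t in Ioi 0, ⟪D t, x⟫| ≤ A * ‖x‖ / (a + 1) - B * ‖x‖ / (b + 1) :=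
        abs_setIntegral_Ioi_zero_le ha hb (hD x).1
          (fun t ht => (hbound (h₁ t ht)).trans_eq (by ring))
          (fun t ht => (hbound (h₂ t ht)).trans_eq (by ring))
    _ = (A / (a + 1) - B / (b + 1)) * ‖x‖ := by ring

lemma Orthonormal.norm_fracPow_sub_fracPowh_le [CompleteSpace H] {e : ℕ → H}
    (he : Orthonormal ℝ e) {lam : ℕ → ℝ} {m β : ℝ} (hβ : 0 < β) (hm : 0 < m)
    (hlam : ∀ j, m ≤ lam j) {n : ℕ} {lamh : ℕ → ℝ} (hlamh : ∀ j, 0 < lamh j) (eh : ℕ → H)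
    {g : H} {A B a b : ℝ} (ha : -β < a) (hb : b < -β)
    (h₁ : ∀ t ∈ Ioc (0 : ℝ) 1, ‖semiGp lam e t g - semiGph n lamh eh t g‖ ≤ A * t ^ a)
    (h₂ : ∀ t ∈ Ioi (1 : ℝ), ‖semiGp lam e t g - semiGph n lamh eh t g‖ ≤ B * t ^ b) :
    ‖fracPow lam β e g - fracPowh n lamh β eh g‖ ≤ (A / (β + a) - B / (β + b)) / Gamma β := by
  have hΓ : 0 < Gamma β := Gamma_pos_of_pos hβ
  have hweight {c p t : ℝ} (ht : 0 < t)
      (hv : ‖semiGp lam e t g - semiGph n lamh eh t g‖ ≤ c * t ^ p) :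
      ‖t ^ (β - 1) • (semiGp lam e t g - semiGph n lamh eh t g)‖ ≤ c * t ^ (β - 1 + p) := by
    rw [norm_smul, norm_of_nonneg (rpow_nonneg ht.le _), rpow_add ht]
    calc t ^ (β - 1) * ‖semiGp lam e t g - semiGph n lamh eh t g‖
        ≤ t ^ (β - 1) * (c * t ^ p) := mul_le_mul_of_nonneg_left hv (rpow_nonneg ht.le _)
      _ = c * (t ^ (β - 1) * t ^ p) := by ring
  have key := norm_le_of_inner_eq_setIntegral (by linarith : -1 < β - 1 + a)
    (by linarith : β - 1 + b < -1)
    (he.inner_gamma_smul_fracPow_sub_fracPowh hβ hm hlam hlamh eh g)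
    (fun t ht => hweight ht.1 (h₁ t ht)) (fun t ht => hweight (one_pos.trans ht) (h₂ t ht))
  rw [norm_smul, norm_of_nonneg hΓ.le, ← le_div_iff₀' hΓ] at key
  exact key.trans_eq (by ring)

section SobolevScale

variable {lam : ℕ → ℝ} {m θ θ₂ : ℝ} {e : ℕ → H} {g : H}

lemma rpow_le_rpow_sub_mul_rpow {μ : ℝ} (hm : 0 < m) (hmμ : m ≤ μ) (hθ : θ ≤ θ₂) :
    μ ^ θ ≤ m ^ (θ - θ₂) * μ ^ θ₂ := by
  have hμ : 0 < μ := hm.trans_le hmμ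
  calc μ ^ θ = μ ^ (θ - θ₂) * μ ^ θ₂ := by rw [← rpow_add hμ, sub_add_cancel]
    _ ≤ m ^ (θ - θ₂) * μ ^ θ₂ := mul_le_mul_of_nonneg_right
        (rpow_le_rpow_of_nonpos hm hmμ (by linarith)) (rpow_nonneg hμ.le _)

lemma rpow_mul_inner_sq_le (hm : 0 < m) (hlam : ∀ j, m ≤ lam j) (hθ : θ ≤ θ₂) (j : ℕ) :
    lam j ^ θ * ⟪g, e j⟫ ^ 2 ≤ m ^ (θ - θ₂) * (lam j ^ θ₂ * ⟪g, e j⟫ ^ 2) := by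
  rw [← mul_assoc]
  exact mul_le_mul_of_nonneg_right (rpow_le_rpow_sub_mul_rpow hm (hlam j) hθ) (sq_nonneg _)

lemma memDot.of_le (hg : memDot lam θ₂ e g) (hm : 0 < m) (hlam : ∀ j, m ≤ lam j)
    (hθ : θ ≤ θ₂) : memDot lam θ e g :=
  (hg.mul_left _).of_nonneg_of_le
    (fun j => mul_nonneg (rpow_nonneg (hm.le.trans (hlam j)) _) (sq_nonneg _))
    (rpow_mul_inner_sq_le hm hlam hθ)

lemma dotNorm_le_of_le (hg : memDot lam θ₂ e g) (hm : 0 < m) (hlam : ∀ j, m ≤ lam j)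
    (hθ : θ ≤ θ₂) : dotNorm lam θ e g ≤ √(m ^ (θ - θ₂)) * dotNorm lam θ₂ e g := by
  rw [dotNorm, dotNorm, ← sqrt_mul (rpow_nonneg hm.le _), ← tsum_mul_left]
  exact sqrt_le_sqrt (Summable.tsum_le_tsum (rpow_mul_inner_sq_le hm hlam hθ)
    (hg.of_le hm hlam hθ) (hg.mul_left _))

end SobolevScale

theorem stmt8_general
    {H : Type*} [NormedAddCommGroup H] [InnerProductSpace ℝ H] [CompleteSpace H]
    (e : ℕ → H) (he : Orthonormal ℝ e)
    (lam : ℕ → ℝ) (hlam_pos : ∀ j, 0 < lam j) (hlam_mono : Monotone lam)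
    (β : ℝ) (hβ : β ∈ Set.Ioo (0 : ℝ) 1)
    (N : ℝ → ℕ) (eh : ℝ → ℕ → H) (lamh : ℝ → ℕ → ℝ)
    (hlamh_pos : ∀ h j, 0 < lamh h j)
    -- Assumption (iv)
    (h₀ : ℝ) (s : ℝ) (hsβ : 2 * β < s)
    (C₃ : ℝ) (hC₃ : 0 < C₃)
    (hiv : ∀ θ' σ : ℝ, 0 ≤ θ' → θ' ≤ σ → σ ≤ s → ∀ t : ℝ, 0 < t →
      ∀ h ∈ Set.Ioo (0 : ℝ) h₀, ∀ g : H, memDot lam θ' e g →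
      ‖semiGp lam e t g - semiGph (N h) (lamh h) (eh h) t g‖ ≤
        C₃ * h ^ σ * t ^ ((θ' - σ) / 2) * dotNorm lam θ' e g) :
    ∀ ε > (0 : ℝ), ∃ C > (0 : ℝ),
      ∀ g : H, memDot lam (s - 2 * β + ε) e g →
      ∀ h ∈ Set.Ioo (0 : ℝ) h₀,
        ‖fracPow lam β e g - fracPowh (N h) (lamh h) β (eh h) g‖ ≤
          C * h ^ s * dotNorm lam (s - 2 * β + ε) e g := by
  intro ε hε
  have hm : ∀ j, lam 0 ≤ lam j := fun j => hlam_mono (Nat.zero_le j)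
  have hβ0 : 0 < β := hβ.1
  set θ₂ := s - 2 * β + ε with hθ₂
  set θ := min θ₂ s
  have hθ : s - 2 * β < θ := lt_min (by linarith) (by linarith)
  set c₁ := √(lam 0 ^ (θ - θ₂))
  set c₂ := √(lam 0 ^ (0 - θ₂))
  refine ⟨C₃ / Gamma β * (c₁ / (β + (θ - s) / 2) - c₂ / (β + (0 - s) / 2)), ?_,
    fun g hg h hh => ?_⟩
  · have : c₂ / (β + (0 - s) / 2) < 0 :=
      div_neg_of_pos_of_neg (sqrt_pos.2 (rpow_pos_of_pos (hlam_pos 0) _)) (by linarith)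
    have : 0 < c₁ / (β + (θ - s) / 2) :=
      div_pos (sqrt_pos.2 (rpow_pos_of_pos (hlam_pos 0) _)) (by linarith)
    exact mul_pos (div_pos hC₃ (Gamma_pos_of_pos hβ0)) (by linarith)
  have herr (θ' : ℝ) (h0 : 0 ≤ θ') (hθ's : θ' ≤ s) (hθ'₂ : θ' ≤ θ₂) (t : ℝ) (ht : 0 < t) :
      ‖semiGp lam e t g - semiGph (N h) (lamh h) (eh h) t g‖ ≤
        C₃ * h ^ s * √(lam 0 ^ (θ' - θ₂)) * dotNorm lam θ₂ e g * t ^ ((θ' - s) / 2) := by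
    have := rpow_pos_of_pos hh.1 s
    calc _ ≤ C₃ * h ^ s * t ^ ((θ' - s) / 2) * dotNorm lam θ' e g :=
          hiv θ' s h0 hθ's le_rfl t ht h hh g (hg.of_le (hlam_pos 0) hm hθ'₂)
      _ ≤ C₃ * h ^ s * t ^ ((θ' - s) / 2) * (√(lam 0 ^ (θ' - θ₂)) * dotNorm lam θ₂ e g) := by
          gcongr
          exact dotNorm_le_of_le hg (hlam_pos 0) hm hθ'₂
      _ = _ := by ring
  refine (he.norm_fracPow_sub_fracPowh_le hβ0 (hlam_pos 0) hm (hlamh_pos h) (eh h)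
    (by linarith) (by linarith)
    (fun t ht => herr θ (by linarith) (min_le_right _ _) (min_le_left _ _) t ht.1)
    (fun t ht => herr 0 le_rfl (by linarith) (by linarith) t (one_pos.trans ht))).trans_eq ?_
  ring

/-- Under Assumption (iv), the optimal deterministic finite element
error bound `‖(L^{−β} − L_h^{−β}Π_h)g‖ ≤ C h^s ‖g‖_{s−2β+ε}`. -/
theorem stmt8
    {H : Type*} [NormedAddCommGroup H] [InnerProductSpace ℝ H] [CompleteSpace H]
    (e : ℕ → H) (he : Orthonormal ℝ e)
    (hbasis : (Submodule.span ℝ (Set.range e)).topologicalClosure = ⊤)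
    (lam : ℕ → ℝ) (hlam_pos : ∀ j, 0 < lam j) (hlam_mono : Monotone lam)
    (β : ℝ) (hβ : β ∈ Set.Ioo (0 : ℝ) 1)
    (N : ℝ → ℕ) (eh : ℝ → ℕ → H) (lamh : ℝ → ℕ → ℝ)
    (hlamh_pos : ∀ h j, 0 < lamh h j)
    (heh : ∀ h : ℝ, Orthonormal ℝ (fun j : Fin (N h) => eh h j))
    -- Assumption (iv)
    (h₀ : ℝ) (hh₀ : h₀ ∈ Set.Ioo (0 : ℝ) 1) (s : ℝ) (hsβ : 2 * β < s)
    (C₃ : ℝ) (hC₃ : 0 < C₃)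
    (hiv : ∀ θ' σ : ℝ, 0 ≤ θ' → θ' ≤ σ → σ ≤ s → ∀ t : ℝ, 0 < t →
      ∀ h ∈ Set.Ioo (0 : ℝ) h₀, ∀ g : H, memDot lam θ' e g →
      ‖semiGp lam e t g - semiGph (N h) (lamh h) (eh h) t g‖ ≤
        C₃ * h ^ σ * t ^ ((θ' - σ) / 2) * dotNorm lam θ' e g) :
    ∀ ε > (0 : ℝ), ∃ C > (0 : ℝ),
      ∀ g : H, memDot lam (s - 2 * β + ε) e g →
      ∀ h ∈ Set.Ioo (0 : ℝ) h₀,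
        ‖fracPow lam β e g - fracPowh (N h) (lamh h) β (eh h) g‖ ≤
          C * h ^ s * dotNorm lam (s - 2 * β + ε) e g :=
  stmt8_general e he lam hlam_pos hlam_mono β hβ N eh lamh hlamh_pos h₀ s hsβ C₃ hC₃ hiv
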